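/- arXiv:2404.00538 — 3 statements merged into one kernel-verified Lean document; each statement's English description precedes it below -/
import Mathlib

section
/- Johnson–Lindenstrauss lemma: Given any ε ∈ (0,1) and an integer N ≥ 2, let k be a positive integer satisfying k ≥ (24 / (3ε² − 2ε³)) · log N. Then for any set A containing N points in ℝ^m there exists a linear map f : ℝ^m → ℝ^k such that for all x, y ∈ A: (1−ε)‖x−y‖² ≤ ‖f(x)−f(y)‖² ≤ (1+ε)‖x−y‖². -/
/-!
Take `f = k^{-1/2} G`, where the rows of `G` are independent standard Gaussian vectors of `ℝ^m`.
For a unit vector `u` the coordinates of `G u` are independent standard Gaussians, so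
`k ‖f u‖²` is `χ²`-distributed with `k` degrees of freedom, with moment generating function
`(1 - 2t)^{-k/2}`. Chernoff's bound together with `log (1 + x) ≤ x - x²/2 + x³/3` shows that
`‖f u‖²` leaves `[1 - ε, 1 + ε]` with probability at most `2 exp (-k (ε²/4 - ε³/6)) ≤ 2 / N²`.
A union bound over the `N (N - 1) / 2` differences `x - y` leaves positive probability that
`f` distorts none of them.
-/

open Real MeasureTheory ProbabilityTheory
open scoped RealInnerProductSpace Finset

lemma Real.log_one_add_le_cubic {x : ℝ} (hx : -1 < x) :
    log (1 + x) ≤ x - x ^ 2 / 2 + x ^ 3 / 3 := by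
  set g : ℝ → ℝ := fun s ↦ s - s ^ 2 / 2 + s ^ 3 / 3 - log (1 + s)
  have hg : ∀ s, -1 < s → HasDerivAt g (s ^ 3 / (1 + s)) s := fun s hs ↦ by
    have hs' : 1 + s ≠ 0 := by linarith
    refine ((((hasDerivAt_id s).sub ((hasDerivAt_pow 2 s).div_const 2)).add
      ((hasDerivAt_pow 3 s).div_const 3)).sub
        (((hasDerivAt_id s).const_add 1).log hs')).congr_deriv ?_
    simp only [id, Nat.cast_ofNat]
    field_simp
    ring
  have hcont : ∀ a, -1 < a → ContinuousOn g (Set.Ici a) := fun a ha s hs ↦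
    (hg s (ha.trans_le hs)).continuousAt.continuousWithinAt
  suffices g 0 ≤ g x by simpa [g] using this
  rcases le_or_gt 0 x with h | h
  · refine monotoneOn_of_hasDerivWithinAt_nonneg (convex_Icc 0 x)
      ((hcont 0 (by norm_num)).mono Set.Icc_subset_Ici_self)
      (fun s hs ↦ (hg s ?_).hasDerivWithinAt) (fun s hs ↦ ?_) ⟨le_rfl, h⟩ ⟨h, le_rfl⟩ h
      <;> rw [interior_Icc] at hs
    · linarith [hs.1]
    · have := hs.1; positivity
  · refine antitoneOn_of_hasDerivWithinAt_nonpos (convex_Icc x 0)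
      ((hcont x hx).mono Set.Icc_subset_Ici_self)
      (fun s hs ↦ (hg s ?_).hasDerivWithinAt) (fun s hs ↦ ?_) ⟨le_rfl, h.le⟩ ⟨h.le, le_rfl⟩ h.le
      <;> rw [interior_Icc] at hs
    · linarith [hs.1]
    · exact div_nonpos_of_nonpos_of_nonneg (by nlinarith [hs.2, sq_nonneg s]) (by linarith [hs.1])

-- For `1 ≤ 2 * t` both sides are junk zeros.
lemma integral_exp_mul_sq_gaussianReal (t : ℝ) :
    ∫ x, exp (t * x ^ 2) ∂gaussianReal 0 1 = (√(1 - 2 * t))⁻¹ := by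
  have hpdf : ∀ x, gaussianPDFReal 0 1 x • exp (t * x ^ 2)
      = (√(2 * π))⁻¹ * exp (-(1 / 2 - t) * x ^ 2) := fun x ↦ by
    simp only [gaussianPDFReal_def, NNReal.coe_one, mul_one, sub_zero, smul_eq_mul, mul_assoc,
      ← exp_add]
    ring_nf
  have hπ : √π ≠ 0 := (sqrt_pos.2 pi_pos).ne'
  rw [integral_gaussianReal_eq_integral_smul one_ne_zero]
  simp_rw [hpdf, integral_const_mul, integral_gaussian, sqrt_div pi_pos.le, sqrt_mul zero_le_two,
    show 1 - 2 * t = 2 * (1 / 2 - t) by ring, sqrt_mul zero_le_two]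
  field_simp

lemma inv_sqrt_pow_eq_exp {s : ℝ} (hs : 0 < s) (k : ℕ) :
    (√s)⁻¹ ^ k = exp (-(k / 2 * log s)) := by
  rw [sqrt_eq_rpow, ← rpow_neg hs.le, ← rpow_natCast, ← rpow_mul hs.le, rpow_def_of_pos hs]
  ring_nf

section ChiSquaredTail

variable {Ω : Type*} [MeasurableSpace Ω] {μ : Measure Ω} {Z : Ω → ℝ} {k : ℕ}

lemma integrable_exp_mul_of_mgf_eq (hZ : ∀ t < 1 / 2, mgf Z μ t = (√(1 - 2 * t))⁻¹ ^ k)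
    {t : ℝ} (ht : t < 1 / 2) : Integrable (fun ω ↦ exp (t * Z ω)) μ := by
  refine Integrable.of_integral_ne_zero ?_
  rw [← mgf, hZ t ht]
  exact pow_ne_zero _ (inv_ne_zero (sqrt_pos.2 (by linarith)).ne')

variable [IsFiniteMeasure μ]

lemma measureReal_ge_le_of_mgf_eq (hZ : ∀ t < 1 / 2, mgf Z μ t = (√(1 - 2 * t))⁻¹ ^ k)
    {t : ℝ} (ht₀ : 0 ≤ t) (ht : t < 1 / 2) (a : ℝ) :
    μ.real {ω | a ≤ Z ω} ≤ exp (-(t * a) - k / 2 * log (1 - 2 * t)) := by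
  have hpos : 0 < 1 - 2 * t := by linarith
  refine (measure_ge_le_exp_mul_mgf a ht₀ (integrable_exp_mul_of_mgf_eq hZ ht)).trans_eq ?_
  rw [hZ t ht, inv_sqrt_pow_eq_exp hpos, ← exp_add]
  ring_nf

lemma measureReal_le_le_of_mgf_eq (hZ : ∀ t < 1 / 2, mgf Z μ t = (√(1 - 2 * t))⁻¹ ^ k)
    {t : ℝ} (ht₀ : t ≤ 0) (a : ℝ) :
    μ.real {ω | Z ω ≤ a} ≤ exp (-(t * a) - k / 2 * log (1 - 2 * t)) := by
  have ht : t < 1 / 2 := by linarith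
  have hpos : 0 < 1 - 2 * t := by linarith
  refine (measure_le_le_exp_mul_mgf a ht₀ (integrable_exp_mul_of_mgf_eq hZ ht)).trans_eq ?_
  rw [hZ t ht, inv_sqrt_pow_eq_exp hpos, ← exp_add]
  ring_nf

lemma measureReal_ge_one_add_mul_le_of_mgf_eq
    (hZ : ∀ t < 1 / 2, mgf Z μ t = (√(1 - 2 * t))⁻¹ ^ k) {ε : ℝ} (hε : ε ∈ Set.Ioo 0 1) :
    μ.real {ω | (1 + ε) * k ≤ Z ω} ≤ exp (-(k * (ε ^ 2 / 4 - ε ^ 3 / 6))) := by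
  obtain ⟨hε₀, hε₁⟩ := hε
  -- `t = ε / (2 (1 + ε))` minimises the Chernoff exponent `-(1 + ε) k t - (k / 2) log (1 - 2t)`.
  have h2t : 1 - 2 * (ε / (2 * (1 + ε))) = (1 + ε)⁻¹ := by field_simp; ring
  have ht : ε / (2 * (1 + ε)) < 1 / 2 := by
    linarith [h2t, inv_pos.2 (by linarith : (0 : ℝ) < 1 + ε)]
  refine (measureReal_ge_le_of_mgf_eq hZ (by positivity) ht _).trans (exp_le_exp.2 ?_)
  have hta : ε / (2 * (1 + ε)) * ((1 + ε) * k) = ε / 2 * k := by field_simp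
  rw [h2t, log_inv, hta]
  nlinarith [mul_le_mul_of_nonneg_left (log_one_add_le_cubic (x := ε) (by linarith))
    (Nat.cast_nonneg (α := ℝ) k)]

lemma measureReal_le_one_sub_mul_le_of_mgf_eq
    (hZ : ∀ t < 1 / 2, mgf Z μ t = (√(1 - 2 * t))⁻¹ ^ k) {ε : ℝ} (hε : ε ∈ Set.Ioo 0 1) :
    μ.real {ω | Z ω ≤ (1 - ε) * k} ≤ exp (-(k * (ε ^ 2 / 4 - ε ^ 3 / 6))) := by
  obtain ⟨hε₀, hε₁⟩ := hε
  have hε₁' : 1 - ε ≠ 0 := by linarith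
  have h2t : 1 - 2 * -(ε / (2 * (1 - ε))) = (1 - ε)⁻¹ := by field_simp; ring
  have ht : -(ε / (2 * (1 - ε))) ≤ 0 := neg_nonpos.2 (div_nonneg hε₀.le (by linarith))
  refine (measureReal_le_le_of_mgf_eq hZ ht _).trans (exp_le_exp.2 ?_)
  have hta : -(ε / (2 * (1 - ε))) * ((1 - ε) * k) = -(ε / 2 * k) := by field_simp
  have hlog := log_one_add_le_cubic (x := -ε) (by linarith)
  rw [← sub_eq_add_neg] at hlog
  rw [h2t, log_inv, hta]
  nlinarith [mul_le_mul_of_nonneg_left hlog (Nat.cast_nonneg (α := ℝ) k),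
    mul_nonneg (Nat.cast_nonneg (α := ℝ) k) (pow_pos hε₀ 3).le]

lemma measureReal_notMem_Icc_le_of_mgf_eq
    (hZ : ∀ t < 1 / 2, mgf Z μ t = (√(1 - 2 * t))⁻¹ ^ k) {ε : ℝ} (hε : ε ∈ Set.Ioo 0 1) :
    μ.real {ω | Z ω ∉ Set.Icc ((1 - ε) * k) ((1 + ε) * k)}
      ≤ 2 * exp (-(k * (ε ^ 2 / 4 - ε ^ 3 / 6))) := by
  have hsub : {ω | Z ω ∉ Set.Icc ((1 - ε) * k) ((1 + ε) * k)}
      ⊆ {ω | Z ω ≤ (1 - ε) * k} ∪ {ω | (1 + ε) * k ≤ Z ω} := fun ω hω ↦ by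
    simp only [Set.mem_ofPred_eq, Set.mem_Icc, not_and_or, not_le] at hω
    exact hω.imp le_of_lt le_of_lt
  linarith [measureReal_mono hsub (measure_ne_top μ _),
    measureReal_union_le (μ := μ) {ω | Z ω ≤ (1 - ε) * k} {ω | (1 + ε) * k ≤ Z ω},
    measureReal_le_one_sub_mul_le_of_mgf_eq hZ hε, measureReal_ge_one_add_mul_le_of_mgf_eq hZ hε]

end ChiSquaredTail

lemma measureReal_biUnion_offDiag_le {Ω α : Type*} [MeasurableSpace Ω] {μ : Measure Ω}
    [DecidableEq α] (s : Finset α) {B : α → α → Set Ω} (hB : ∀ x y, B x y = B y x) {p : ℝ}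
    (hp : ∀ x ∈ s, ∀ y ∈ s, x ≠ y → μ.real (B x y) ≤ p) :
    μ.real (⋃ q ∈ s.offDiag, B q.1 q.2) ≤ (#s).choose 2 * p := by
  have hunion : ⋃ q ∈ s.offDiag, B q.1 q.2
      = ⋃ z ∈ s.offDiag.image (Function.uncurry Sym2.mk), Sym2.lift ⟨B, hB⟩ z := by
    rw [Finset.set_biUnion_finset_image]
    rfl
  rw [hunion, ← Sym2.card_image_offDiag s, ← nsmul_eq_mul]
  refine (measureReal_biUnion_finset_le _ _).trans (Finset.sum_le_card_nsmul _ _ _ ?_)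
  simp only [Finset.mem_image, Finset.mem_offDiag, Prod.exists, Function.uncurry_apply_pair]
  rintro _ ⟨x, y, ⟨hx, hy, hxy⟩, rfl⟩
  exact hp x hx y hy hxy

lemma choose_two_mul_two_mul_exp_neg_lt_one (N : ℕ) {a : ℝ} (ha : 2 * log N ≤ a) :
    (N.choose 2 : ℝ) * (2 * exp (-a)) < 1 := by
  rcases N.eq_zero_or_pos with rfl | hN
  · simp
  have hN' : (1 : ℝ) ≤ N := by exact_mod_cast hN
  have hexp : exp (-a) ≤ ((N : ℝ) ^ 2)⁻¹ := by
    rw [← exp_log (by positivity : (0 : ℝ) < N ^ 2), ← exp_neg, log_pow]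
    exact exp_le_exp.2 (by push_cast; linarith)
  rw [Nat.cast_choose_two]
  calc (N : ℝ) * (N - 1) / 2 * (2 * exp (-a)) ≤ N * (N - 1) / 2 * (2 * ((N : ℝ) ^ 2)⁻¹) := by
        gcongr
    _ = (N - 1) / N := by field_simp
    _ < 1 := by rw [div_lt_one (by linarith)]; linarith

section RandomProjection

variable {E : Type*} [NormedAddCommGroup E] [InnerProductSpace ℝ E]

variable (E) in
noncomputable def randomProjection {k : ℕ} (ω : Fin k → E) : E →ₗ[ℝ] EuclideanSpace ℝ (Fin k) :=
  (√k)⁻¹ • ((WithLp.linearEquiv 2 ℝ (Fin k → ℝ)).symm.toLinearMap ∘ₗ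
    LinearMap.pi fun i ↦ innerₛₗ ℝ (ω i))

lemma norm_randomProjection_sq {k : ℕ} (ω : Fin k → E) (x : E) :
    ‖randomProjection E ω x‖ ^ 2 = (∑ i, ⟪ω i, x⟫ ^ 2) / k := by
  simp [randomProjection, EuclideanSpace.real_norm_sq_eq, div_pow, Finset.sum_div, inv_mul_eq_div]

variable [FiniteDimensional ℝ E] [MeasurableSpace E] [BorelSpace E]

lemma stdGaussian_map_innerSL (u : E) :
    (stdGaussian E).map (innerSL ℝ u) = gaussianReal 0 (‖u‖ ^ 2).toNNReal := by
  rw [IsGaussian.map_eq_gaussianReal, integral_strongDual_stdGaussian, variance_dual_stdGaussian,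
    innerSL_apply_norm]

lemma integral_exp_mul_inner_sq_stdGaussian {u : E} (hu : ‖u‖ = 1) (t : ℝ) :
    ∫ w, exp (t * ⟪w, u⟫ ^ 2) ∂stdGaussian E = (√(1 - 2 * t))⁻¹ := by
  have hmap := stdGaussian_map_innerSL u
  rw [hu, one_pow, Real.toNNReal_one] at hmap
  rw [← integral_exp_mul_sq_gaussianReal, ← hmap, integral_map (by fun_prop) (by fun_prop)]
  simp_rw [innerSL_apply_apply, real_inner_comm]

lemma mgf_sum_inner_sq_stdGaussian {u : E} (hu : ‖u‖ = 1) (k : ℕ) (t : ℝ) :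
    mgf (fun ω : Fin k → E ↦ ∑ i, ⟪ω i, u⟫ ^ 2) (Measure.pi fun _ ↦ stdGaussian E) t
      = (√(1 - 2 * t))⁻¹ ^ k := by
  simp_rw [mgf, Finset.mul_sum, exp_sum,
    integral_fintype_prod_eq_prod (fun _ w ↦ exp (t * ⟪w, u⟫ ^ 2)),
    integral_exp_mul_inner_sq_stdGaussian hu, Finset.prod_const, Finset.card_univ, Fintype.card_fin]

lemma measureReal_norm_randomProjection_sq_notMem_Icc_le {ε : ℝ} (hε : ε ∈ Set.Ioo 0 1) (k : ℕ)
    (x : E) :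
    (Measure.pi fun _ : Fin k ↦ stdGaussian E).real
      {ω | ‖randomProjection E ω x‖ ^ 2 ∉ Set.Icc ((1 - ε) * ‖x‖ ^ 2) ((1 + ε) * ‖x‖ ^ 2)}
      ≤ 2 * exp (-(k * (ε ^ 2 / 4 - ε ^ 3 / 6))) := by
  rcases eq_or_ne x 0 with rfl | hx
  · simp [exp_nonneg]
  rcases k.eq_zero_or_pos with rfl | hk
  · simpa using measureReal_le_one.trans one_le_two
  set u := ‖x‖⁻¹ • x
  have hu : ‖u‖ = 1 := norm_smul_inv_norm hx
  have hc : 0 < ‖x‖ ^ 2 / k := by positivity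
  have hnorm : ∀ ω : Fin k → E,
      ‖randomProjection E ω x‖ ^ 2 = ‖x‖ ^ 2 / k * ∑ i, ⟪ω i, u⟫ ^ 2 := fun ω ↦ by
    simp only [norm_randomProjection_sq, u, inner_smul_right, mul_pow, ← Finset.mul_sum]
    field_simp
  have hbound : ∀ c : ℝ, c * ‖x‖ ^ 2 = ‖x‖ ^ 2 / k * (c * k) := fun c ↦ by field_simp
  simp only [hnorm, hbound (1 - ε), hbound (1 + ε), Set.mem_Icc, mul_le_mul_iff_right₀ hc]
  exact measureReal_notMem_Icc_le_of_mgf_eq (fun t _ ↦ mgf_sum_inner_sq_stdGaussian hu k t) hε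

end RandomProjection

theorem johnson_lindenstrauss_general
    (ε : ℝ) (hε : ε ∈ Set.Ioo (0 : ℝ) 1) (N : ℕ)
    (m k : ℕ)
    (hkN : (24 / (3 * ε ^ 2 - 2 * ε ^ 3)) * Real.log N ≤ (k : ℝ))
    (A : Finset (EuclideanSpace ℝ (Fin m))) (hA : A.card = N) :
    ∃ f : EuclideanSpace ℝ (Fin m) →ₗ[ℝ] EuclideanSpace ℝ (Fin k),
      ∀ x ∈ A, ∀ y ∈ A,
        (1 - ε) * ‖x - y‖ ^ 2 ≤ ‖f x - f y‖ ^ 2 ∧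
          ‖f x - f y‖ ^ 2 ≤ (1 + ε) * ‖x - y‖ ^ 2 := by
  classical
  set P := Measure.pi fun _ : Fin k ↦ stdGaussian (EuclideanSpace ℝ (Fin m))
  set bad : EuclideanSpace ℝ (Fin m) → EuclideanSpace ℝ (Fin m) → Set (Fin k → _) :=
    fun x y ↦ {ω | ‖randomProjection _ ω (x - y)‖ ^ 2 ∉
      Set.Icc ((1 - ε) * ‖x - y‖ ^ 2) ((1 + ε) * ‖x - y‖ ^ 2)}
  have hbad : ∀ x y, bad x y = bad y x := fun x y ↦ by
    simp only [bad, ← neg_sub y x, map_neg, norm_neg]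
  have hkδ : 2 * log N ≤ k * (ε ^ 2 / 4 - ε ^ 3 / 6) := by
    obtain ⟨hε₀, hε₁⟩ := hε
    have hδ : 0 < ε ^ 2 / 4 - ε ^ 3 / 6 := by nlinarith [pow_pos hε₀ 2]
    have h24 : 24 / (3 * ε ^ 2 - 2 * ε ^ 3) = 2 / (ε ^ 2 / 4 - ε ^ 3 / 6) := by
      rw [div_eq_div_iff (by linarith) hδ.ne']
      ring
    rwa [h24, div_mul_eq_mul_div, div_le_iff₀ hδ] at hkN
  have hP : P.real (⋃ q ∈ A.offDiag, bad q.1 q.2) < 1 := by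
    refine (measureReal_biUnion_offDiag_le A hbad fun x _ y _ _ ↦
      measureReal_norm_randomProjection_sq_notMem_Icc_le hε k (x - y)).trans_lt ?_
    rw [hA]
    exact choose_two_mul_two_mul_exp_neg_lt_one N hkδ
  obtain ⟨ω, hω⟩ : ∃ ω, ω ∉ ⋃ q ∈ A.offDiag, bad q.1 q.2 := by
    by_contra! h
    rw [Set.eq_univ_of_forall h, probReal_univ] at hP
    exact lt_irrefl _ hP
  refine ⟨randomProjection _ ω, fun x hx y hy ↦ ?_⟩
  rcases eq_or_ne x y with rfl | hxy
  · simp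
  have hgood : ω ∉ bad x y := fun h ↦
    hω (Set.mem_biUnion (x := (x, y)) (Finset.mem_offDiag.2 ⟨hx, hy, hxy⟩) h)
  simpa [bad, map_sub] using hgood

/-- **Johnson–Lindenstrauss lemma.** Given any `ε ∈ (0,1)` and an integer `N ≥ 2`,
let `k` be a positive integer satisfying `k ≥ (24 / (3ε² − 2ε³)) · log N`.
Then for any set `A` of `N` points in `ℝ^m` there exists a linear map
`f : ℝ^m → ℝ^k` such that for all `x, y ∈ A`,
`(1−ε)‖x−y‖² ≤ ‖f x − f y‖² ≤ (1+ε)‖x−y‖²`. -/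
theorem johnson_lindenstrauss
    (ε : ℝ) (hε : ε ∈ Set.Ioo (0 : ℝ) 1) (N : ℕ) (hN : 2 ≤ N)
    (m k : ℕ) (hk : 0 < k)
    (hkN : (24 / (3 * ε ^ 2 - 2 * ε ^ 3)) * Real.log N ≤ (k : ℝ))
    (A : Finset (EuclideanSpace ℝ (Fin m))) (hA : A.card = N) :
    ∃ f : EuclideanSpace ℝ (Fin m) →ₗ[ℝ] EuclideanSpace ℝ (Fin k),
      ∀ x ∈ A, ∀ y ∈ A,
        (1 - ε) * ‖x - y‖ ^ 2 ≤ ‖f x - f y‖ ^ 2 ∧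
          ‖f x - f y‖ ^ 2 ≤ (1 + ε) * ‖x - y‖ ^ 2 :=
  johnson_lindenstrauss_general ε hε N m k hkN A hA
end

section
/- Strong consistency of the contaminated Fréchet variance estimator: Let (𝒢, d) be a finite metric space, let X₁, X₂, … be i.i.d. 𝒢-valued random variables with distribution P having unique Fréchet mean μ, and fix t ∈ (0,1). For each N let n = ⌊Nt⌋, let μ̂_{N−n} be a measurable choice of minimizer of ω ↦ (1/(N−n))Σᵢ₌ₙ₊₁^N d²(Xᵢ,ω), and define the contaminated variance V̂ₙᶜ = (1/n)Σᵢ₌₁ⁿ d²(Xᵢ, μ̂_{N−n}). Then V̂ₙᶜ → V = min_{ω∈𝒢} E[d²(X₁,ω)] almost surely as N → ∞. -/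
/-!
For each fixed `c`, the strong law of large numbers makes the averages of `d²(Xᵢ, c)` over the
first `n` indices, and hence over the second block `[⌊Nt⌋, N)`, converge almost surely to
`E d²(X, c)`. Since `𝒢` is finite, almost surely this holds for all `c` at once; the strict gap
between `E d²(X, μ)` and `E d²(X, c)` for `c ≠ μ` then forces the empirical Fréchet mean of the
second block to equal `μ` for all large `N`, so that eventually the contaminated variance is just
the first-block average of `d²(Xᵢ, μ)`, which tends to `V` by the strong law again.
-/

open MeasureTheory ProbabilityTheory Filter Topology

/-- The split point `n = ⌊N t⌋`. -/
noncomputable def splitPt (t : ℝ) (N : ℕ) : ℕ := ⌊(N : ℝ) * t⌋₊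

lemma tendsto_splitPt_atTop {t : ℝ} (ht : 0 < t) :
    Tendsto (splitPt t) atTop atTop :=
  tendsto_nat_floor_atTop.comp (Tendsto.atTop_mul_const ht tendsto_natCast_atTop_atTop)

lemma tendsto_splitPt_div {t : ℝ} (ht : 0 ≤ t) :
    Tendsto (fun N : ℕ => (splitPt t N : ℝ) / N) atTop (𝓝 t) := by
  refine ((tendsto_nat_floor_mul_div_atTop ht).comp tendsto_natCast_atTop_atTop).congr fun N => ?_
  simp [splitPt, mul_comm]

lemma tendsto_blockAverage_of_tendsto_average {a : ℕ → ℝ} {L t : ℝ} {k : ℕ → ℕ}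
    (ha : Tendsto (fun n : ℕ => (∑ i ∈ Finset.range n, a i) / n) atTop (𝓝 L))
    (hk : Tendsto k atTop atTop) (hkt : Tendsto (fun N : ℕ => (k N : ℝ) / N) atTop (𝓝 t))
    (ht : t < 1) :
    Tendsto (fun N : ℕ => ((N - k N : ℕ) : ℝ)⁻¹ * ∑ i ∈ Finset.Ico (k N) N, a i)
      atTop (𝓝 L) := by
  set s : ℕ → ℝ := fun n => ∑ i ∈ Finset.range n, a i
  have hlim : Tendsto (fun N : ℕ => (s N / N - (k N : ℝ) / N * (s (k N) / k N)) / (1 - k N / N))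
      atTop (𝓝 ((L - t * L) / (1 - t))) :=
    (ha.sub (hkt.mul (ha.comp hk))).div (tendsto_const_nhds.sub hkt) (sub_ne_zero.2 ht.ne')
  rw [show (L - t * L) / (1 - t) = L by field_simp [sub_ne_zero.2 ht.ne']] at hlim
  refine hlim.congr' ?_
  filter_upwards [hk.eventually_ge_atTop 1, hkt.eventually_lt_const ht, eventually_gt_atTop 0]
    with N hk1 hkN hN
  have hN' : (0 : ℝ) < N := by exact_mod_cast hN
  have hkN' : (k N : ℝ) < N := by rwa [div_lt_one hN'] at hkN
  have hk1' : (1 : ℝ) ≤ k N := by exact_mod_cast hk1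
  have hkle : k N ≤ N := by exact_mod_cast hkN'.le
  have hsum : ∑ i ∈ Finset.Ico (k N) N, a i = s N - s (k N) := Finset.sum_Ico_eq_sub _ hkle
  rw [hsum, Nat.cast_sub hkle]
  field_simp [sub_ne_zero.2 hkN'.ne', (by linarith : (k N : ℝ) ≠ 0)]

lemma ae_tendsto_average_comp {G Ω : Type*} [MeasurableSpace G] [MeasurableSpace Ω]
    {Pr : Measure Ω} {P : Measure G} {X : ℕ → Ω → G} (hXmeas : ∀ i, Measurable (X i))
    (hXindep : iIndepFun X Pr) (hXdist : ∀ i, Measure.map (X i) Pr = P)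
    {f : G → ℝ} (hf : Measurable f) (hfP : Integrable f P) :
    ∀ᵐ ω ∂Pr, Tendsto (fun n : ℕ => (∑ i ∈ Finset.range n, f (X i ω)) / n)
      atTop (𝓝 (∫ x, f x ∂P)) := by
  have hint : Integrable (f ∘ X 0) Pr := by
    rw [← integrable_map_measure hf.aestronglyMeasurable (hXmeas 0).aemeasurable, hXdist 0]
    exact hfP
  have hident : ∀ i, IdentDistrib (f ∘ X i) (f ∘ X 0) Pr Pr := fun i =>
    IdentDistrib.comp ⟨(hXmeas i).aemeasurable, (hXmeas 0).aemeasurable, by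
      rw [hXdist i, hXdist 0]⟩ hf
  have hmean : ∫ ω, f (X 0 ω) ∂Pr = ∫ x, f x ∂P := by
    rw [← hXdist 0, integral_map (hXmeas 0).aemeasurable hf.aestronglyMeasurable]
  simpa only [Function.comp_apply, hmean] using strong_law_ae_real (fun i => f ∘ X i) hint
    (fun i j hij => (hXindep.indepFun hij).comp hf hf) hident

lemma eventually_argmin_eq_of_tendsto {G ι : Type*} [Finite G] {l : Filter ι}
    {B : ι → G → ℝ} {m : G → ℝ} (hB : ∀ c, Tendsto (fun N => B N c) l (𝓝 (m c)))
    {μ : G} (hμ : ∀ c, c ≠ μ → m μ < m c) {ν : ι → G} (hν : ∀ N c, B N (ν N) ≤ B N c) :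
    ∀ᶠ N in l, ν N = μ := by
  have hsep : ∀ᶠ N in l, ∀ c, c ≠ μ → B N μ < B N c :=
    eventually_all.2 fun c => by
      by_cases hc : c = μ
      · exact Eventually.of_forall fun _ h => absurd hc h
      · exact ((hB μ).eventually_lt (hB c) (hμ c hc)).mono fun _ h _ => h
  filter_upwards [hsep] with N hN
  by_contra hne
  exact (hν N μ).not_gt (hN _ hne)

theorem contaminated_frechet_variance_consistency_general
    {G : Type*} [MetricSpace G] [Fintype G]
    [MeasurableSpace G] [BorelSpace G]
    {Ω : Type*} [MeasurableSpace Ω] (Pr : Measure Ω)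
    (P : Measure G) [IsProbabilityMeasure P]
    (X : ℕ → Ω → G) (hXmeas : ∀ i, Measurable (X i))
    (hXindep : iIndepFun X Pr)
    (hXdist : ∀ i, Measure.map (X i) Pr = P)
    (μ : G)
    (hμuniq : ∀ c : G, (∀ c' : G, ∫ x, dist x c ^ 2 ∂P ≤ ∫ x, dist x c' ^ 2 ∂P) → c = μ)
    (t : ℝ) (ht : t ∈ Set.Ioo (0 : ℝ) 1)
    (μB : ℕ → Ω → G)
    (hμBmin : ∀ N (ω : Ω) (c : G),
      ((N - splitPt t N : ℕ) : ℝ)⁻¹ *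
          ∑ i ∈ Finset.Ico (splitPt t N) N, dist (X i ω) (μB N ω) ^ 2 ≤
        ((N - splitPt t N : ℕ) : ℝ)⁻¹ *
          ∑ i ∈ Finset.Ico (splitPt t N) N, dist (X i ω) c ^ 2) :
    ∀ᵐ ω ∂Pr, Tendsto
      (fun N : ℕ => ((splitPt t N : ℕ) : ℝ)⁻¹ *
        ∑ i ∈ Finset.range (splitPt t N), dist (X i ω) (μB N ω) ^ 2)
      atTop (𝓝 (⨅ c : G, ∫ x, dist x c ^ 2 ∂P)) := by
  have : Nonempty G := ⟨μ⟩
  set m : G → ℝ := fun c => ∫ x, dist x c ^ 2 ∂P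
  have hμmin : ∀ c, m μ ≤ m c := by
    obtain ⟨c₀, hc₀⟩ := Finite.exists_min m
    exact hμuniq c₀ hc₀ ▸ hc₀
  have hμlt : ∀ c, c ≠ μ → m μ < m c := fun c hc =>
    lt_of_not_ge fun h => hc (hμuniq c fun c' => h.trans (hμmin c'))
  have hSLLN : ∀ᵐ ω ∂Pr, ∀ c, Tendsto (fun n : ℕ => (∑ i ∈ Finset.range n, dist (X i ω) c ^ 2) / n)
      atTop (𝓝 (m c)) :=
    ae_all_iff.2 fun c => ae_tendsto_average_comp hXmeas hXindep hXdist
      ((measurable_id.dist measurable_const).pow_const 2) Integrable.of_finite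
  rw [le_antisymm (ciInf_le (Set.finite_range m).bddBelow μ) (le_ciInf hμmin)]
  filter_upwards [hSLLN] with ω hω
  have hμB : ∀ᶠ N in atTop, μB N ω = μ :=
    eventually_argmin_eq_of_tendsto (fun c => tendsto_blockAverage_of_tendsto_average (hω c)
      (tendsto_splitPt_atTop ht.1) (tendsto_splitPt_div ht.1.le) ht.2) hμlt (hμBmin · ω)
  refine ((hω μ).comp (tendsto_splitPt_atTop ht.1)).congr' ?_
  filter_upwards [hμB] with N hN
  rw [hN, Function.comp_apply, div_eq_inv_mul]

/-- **Strong consistency of the contaminated Fréchet variance estimator.**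
Let `(𝒢, d)` be a finite metric space, `X₁, X₂, …` i.i.d. with distribution `P`
having unique Fréchet mean `μ`, and fix `t ∈ (0,1)`.  For each `N` let
`n = ⌊Nt⌋` and let `μ̂_{N−n}` be a measurable choice of minimizer of
`ω ↦ (1/(N−n)) Σ_{i=n+1}^N d²(Xᵢ,ω)`.  Then the contaminated variance
`V̂ₙᶜ = (1/n) Σ_{i=1}^n d²(Xᵢ, μ̂_{N−n})` converges almost surely to
`V = min_ω E[d²(X₁,ω)]` as `N → ∞`. -/
theorem contaminated_frechet_variance_consistency
    {G : Type*} [MetricSpace G] [Fintype G] [Nonempty G]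
    [MeasurableSpace G] [BorelSpace G]
    {Ω : Type*} [MeasurableSpace Ω] (Pr : Measure Ω) [IsProbabilityMeasure Pr]
    (P : Measure G) [IsProbabilityMeasure P]
    (X : ℕ → Ω → G) (hXmeas : ∀ i, Measurable (X i))
    (hXindep : iIndepFun X Pr)
    (hXdist : ∀ i, Measure.map (X i) Pr = P)
    (μ : G) (hμmin : ∀ c : G, ∫ x, dist x μ ^ 2 ∂P ≤ ∫ x, dist x c ^ 2 ∂P)
    (hμuniq : ∀ c : G, (∀ c' : G, ∫ x, dist x c ^ 2 ∂P ≤ ∫ x, dist x c' ^ 2 ∂P) → c = μ)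
    (t : ℝ) (ht : t ∈ Set.Ioo (0 : ℝ) 1)
    (μB : ℕ → Ω → G) (hμBmeas : ∀ N, Measurable (μB N))
    (hμBmin : ∀ N (ω : Ω) (c : G),
      ((N - splitPt t N : ℕ) : ℝ)⁻¹ *
          ∑ i ∈ Finset.Ico (splitPt t N) N, dist (X i ω) (μB N ω) ^ 2 ≤
        ((N - splitPt t N : ℕ) : ℝ)⁻¹ *
          ∑ i ∈ Finset.Ico (splitPt t N) N, dist (X i ω) c ^ 2) :
    ∀ᵐ ω ∂Pr, Tendsto
      (fun N : ℕ => ((splitPt t N : ℕ) : ℝ)⁻¹ *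
        ∑ i ∈ Finset.range (splitPt t N), dist (X i ω) (μB N ω) ^ 2)
      atTop (𝓝 (⨅ c : G, ∫ x, dist x c ^ 2 ∂P)) :=
  contaminated_frechet_variance_consistency_general Pr P X hXmeas hXindep hXdist μ hμuniq t ht μB
    hμBmin
end

section
/- Strong consistency of the asymptotic variance estimator: Let (𝒢, d) be a finite metric space and let X₁, X₂, … be i.i.d. 𝒢-valued random variables with distribution P having unique Fréchet mean μ. For each N let μ̂ be a measurable choice of minimizer of ω ↦ (1/N)Σᵢ₌₁^N d²(Xᵢ,ω), and set V̂ = (1/N)Σᵢ₌₁^N d²(Xᵢ,μ̂) and σ̂² = (1/N)Σᵢ₌₁^N d⁴(Xᵢ,μ̂) − V̂². Then σ̂² → σ² := E[d⁴(X₁,μ)] − V² almost surely as N → ∞, where V = E[d²(X₁,μ)]. -/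
/-!
Almost surely, the strong law of large numbers holds simultaneously for the finitely many
functions `d(·, c)²` and `d(·, c)⁴`, `c ∈ 𝒢`. The empirical Fréchet functional then converges
pointwise to the population one, whose unique minimiser `μ` beats every other point by a
positive margin; on a finite space this forces `μ̂ = μ` for all large `N`, and the estimator
eventually coincides with `N⁻¹ Σ d⁴(Xᵢ, μ) - (N⁻¹ Σ d²(Xᵢ, μ))²`, which converges by the
strong law.
-/

open MeasureTheory ProbabilityTheory Filter Topology

theorem ae_tendsto_average_comp_of_identDistrib
    {E Ω : Type*} [MeasurableSpace E] [MeasurableSpace Ω] {Pr : Measure Ω} {P : Measure E}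
    {X : ℕ → Ω → E} (hXmeas : ∀ i, Measurable (X i))
    (hXindep : Pairwise fun i j => IndepFun (X i) (X j) Pr)
    (hXdist : ∀ i, Measure.map (X i) Pr = P)
    {f : E → ℝ} (hf : Measurable f) (hfint : Integrable f P) :
    ∀ᵐ ω ∂Pr, Tendsto (fun N : ℕ => (N : ℝ)⁻¹ * ∑ i ∈ Finset.range N, f (X i ω))
      atTop (𝓝 (∫ x, f x ∂P)) := by
  have hint : Integrable (f ∘ X 0) Pr := by
    rw [← hXdist 0] at hfint
    exact hfint.comp_measurable (hXmeas 0)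
  have hident : ∀ i, IdentDistrib (f ∘ X i) (f ∘ X 0) Pr Pr := fun i =>
    IdentDistrib.comp
      ⟨(hXmeas i).aemeasurable, (hXmeas 0).aemeasurable, by rw [hXdist i, hXdist 0]⟩ hf
  have hmean : ∫ ω, f (X 0 ω) ∂Pr = ∫ x, f x ∂P := by
    rw [← hXdist 0, integral_map (hXmeas 0).aemeasurable hf.aestronglyMeasurable]
  filter_upwards [strong_law_ae (fun i => f ∘ X i) hint
    (fun i j hij => (hXindep hij).comp hf hf) hident] with ω hω
  rw [← hmean]
  simpa only [smul_eq_mul, Function.comp_apply] using hω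

theorem eventually_minimizer_eq_of_tendsto
    {ι G : Type*} [Finite G] {l : Filter ι} {F : ι → G → ℝ} {f : G → ℝ} {m : G}
    (hF : ∀ c, Tendsto (fun n => F n c) l (𝓝 (f c))) (hm : ∀ c, c ≠ m → f m < f c)
    {a : ι → G} (ha : ∀ n c, F n (a n) ≤ F n c) :
    ∀ᶠ n in l, a n = m := by
  have hstrict : ∀ᶠ n in l, ∀ c, c ≠ m → F n m < F n c := by
    rw [eventually_all]
    intro c
    rcases eq_or_ne c m with rfl | hc
    · exact Eventually.of_forall fun _ h => absurd rfl h
    · filter_upwards [(hF m).eventually_lt (hF c) (hm c hc)] with n hn _ using hn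
  filter_upwards [hstrict] with n hn
  by_contra h
  exact (ha n m).not_gt (hn _ h)

theorem asymptotic_variance_estimator_consistency_general
    {G : Type*} [MetricSpace G] [Fintype G]
    [MeasurableSpace G] [BorelSpace G]
    {Ω : Type*} [MeasurableSpace Ω] (Pr : Measure Ω)
    (P : Measure G) [IsProbabilityMeasure P]
    (X : ℕ → Ω → G) (hXmeas : ∀ i, Measurable (X i))
    (hXindep : iIndepFun X Pr)
    (hXdist : ∀ i, Measure.map (X i) Pr = P)
    (μ : G) (hμmin : ∀ c : G, ∫ x, dist x μ ^ 2 ∂P ≤ ∫ x, dist x c ^ 2 ∂P)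
    (hμuniq : ∀ c : G, (∀ c' : G, ∫ x, dist x c ^ 2 ∂P ≤ ∫ x, dist x c' ^ 2 ∂P) → c = μ)
    (μhat : ℕ → Ω → G)
    (hμhatmin : ∀ (N : ℕ) (ω : Ω) (c : G),
      (N : ℝ)⁻¹ * ∑ i ∈ Finset.range N, dist (X i ω) (μhat N ω) ^ 2 ≤
        (N : ℝ)⁻¹ * ∑ i ∈ Finset.range N, dist (X i ω) c ^ 2)
    (V : ℝ) (hV : V = ∫ x, dist x μ ^ 2 ∂P) :
    ∀ᵐ ω ∂Pr, Tendsto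
      (fun N : ℕ =>
        (N : ℝ)⁻¹ * ∑ i ∈ Finset.range N, dist (X i ω) (μhat N ω) ^ 4 -
          ((N : ℝ)⁻¹ * ∑ i ∈ Finset.range N, dist (X i ω) (μhat N ω) ^ 2) ^ 2)
      atTop (𝓝 ((∫ x, dist x μ ^ 4 ∂P) - V ^ 2)) := by
  have hslln (k : ℕ) (c : G) := ae_tendsto_average_comp_of_identDistrib hXmeas
    (fun i j hij => hXindep.indepFun hij) hXdist
    (((continuous_id.dist continuous_const).pow k).measurable (f := fun x : G => dist x c ^ k))
    (Integrable.of_finite)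
  have hgap : ∀ c, c ≠ μ → ∫ x, dist x μ ^ 2 ∂P < ∫ x, dist x c ^ 2 ∂P := fun c hc =>
    (hμmin c).lt_of_ne fun h => hc (hμuniq c fun c' => h ▸ hμmin c')
  filter_upwards [ae_all_iff.2 (hslln 2), ae_all_iff.2 (hslln 4)] with ω hω2 hω4
  have hμhat : ∀ᶠ N in atTop, μhat N ω = μ :=
    eventually_minimizer_eq_of_tendsto hω2 hgap (hμhatmin · ω)
  rw [hV]
  refine ((hω4 μ).sub ((hω2 μ).pow 2)).congr' ?_
  filter_upwards [hμhat] with N hN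
  rw [hN]

/-- **Strong consistency of the asymptotic variance estimator.**
Let `(𝒢, d)` be a finite metric space and `X₁, X₂, …` i.i.d. with distribution
`P` having unique Fréchet mean `μ`.  For each `N` let `μ̂` be a measurable
choice of minimizer of `ω ↦ (1/N) Σ_{i=1}^N d²(Xᵢ,ω)`, and set
`V̂ = (1/N) Σ d²(Xᵢ,μ̂)` and `σ̂² = (1/N) Σ d⁴(Xᵢ,μ̂) − V̂²`.  Then
`σ̂² → σ² = E[d⁴(X₁,μ)] − V²` almost surely, where `V = E[d²(X₁,μ)]`. -/
theorem asymptotic_variance_estimator_consistency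
    {G : Type*} [MetricSpace G] [Fintype G] [Nonempty G]
    [MeasurableSpace G] [BorelSpace G]
    {Ω : Type*} [MeasurableSpace Ω] (Pr : Measure Ω) [IsProbabilityMeasure Pr]
    (P : Measure G) [IsProbabilityMeasure P]
    (X : ℕ → Ω → G) (hXmeas : ∀ i, Measurable (X i))
    (hXindep : iIndepFun X Pr)
    (hXdist : ∀ i, Measure.map (X i) Pr = P)
    (μ : G) (hμmin : ∀ c : G, ∫ x, dist x μ ^ 2 ∂P ≤ ∫ x, dist x c ^ 2 ∂P)
    (hμuniq : ∀ c : G, (∀ c' : G, ∫ x, dist x c ^ 2 ∂P ≤ ∫ x, dist x c' ^ 2 ∂P) → c = μ)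
    (μhat : ℕ → Ω → G) (hμhatmeas : ∀ N, Measurable (μhat N))
    (hμhatmin : ∀ (N : ℕ) (ω : Ω) (c : G),
      (N : ℝ)⁻¹ * ∑ i ∈ Finset.range N, dist (X i ω) (μhat N ω) ^ 2 ≤
        (N : ℝ)⁻¹ * ∑ i ∈ Finset.range N, dist (X i ω) c ^ 2)
    (V : ℝ) (hV : V = ∫ x, dist x μ ^ 2 ∂P) :
    ∀ᵐ ω ∂Pr, Tendsto
      (fun N : ℕ =>
        (N : ℝ)⁻¹ * ∑ i ∈ Finset.range N, dist (X i ω) (μhat N ω) ^ 4 -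
          ((N : ℝ)⁻¹ * ∑ i ∈ Finset.range N, dist (X i ω) (μhat N ω) ^ 2) ^ 2)
      atTop (𝓝 ((∫ x, dist x μ ^ 4 ∂P) - V ^ 2)) :=
  asymptotic_variance_estimator_consistency_general Pr P X hXmeas hXindep hXdist μ hμmin hμuniq μhat
    hμhatmin V hV
end
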